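/- arXiv:1609.05579 — 2 statements merged into one kernel-verified Lean document; each statement's English description precedes it below -/
import Mathlib

section
/- Let X be a δ-hyperbolic geodesic metric space and let f ∈ Isom(X) be a hyperbolic isometry with attracting and repelling fixed points A_+ and A_- in ∂X. Fix disjoint neighborhoods U_+ and U_- of A_+ and A_- in X̄ = X ∪ ∂X. Then there exists M ≥ 1 such that for every m ≥ M and every g ∈ Isom(X) with g U_+ ∩ U_- = ∅, the isometry f^m g is hyperbolic. -/
open Filter Metric Set

noncomputable section

universe u

variable {X : Type u} [MetricSpace X]

/-- The Gromov product `(x·y)_w = ½(d(x,w) + d(w,y) − d(x,y))`. -/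
def gromovProduct (w x y : X) : ℝ := (dist x w + dist w y - dist x y) / 2

/-- `γ` is a geodesic from `x` to `y`, parametrized by arc length on `[0, dist x y]`. -/
structure IsGeodesicSegment (γ : ℝ → X) (x y : X) : Prop where
  source : γ 0 = x
  target : γ (dist x y) = y
  isom : ∀ ⦃s t : ℝ⦄, s ∈ Set.Icc (0 : ℝ) (dist x y) → t ∈ Set.Icc (0 : ℝ) (dist x y) →
    dist (γ s) (γ t) = |s - t|

/-- A geodesic metric space is `δ`-hyperbolic: every pair of points is joined by a
geodesic, every geodesic triangle is `δ`-slim, every geodesic triangle has insize at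
most `δ`, and the Gromov product is `δ`-hyperbolic. -/
structure IsDeltaHyperbolic (X : Type u) [MetricSpace X] (δ : ℝ) : Prop where
  delta_nonneg : 0 ≤ δ
  geodesic : ∀ x y : X, ∃ γ : ℝ → X, IsGeodesicSegment γ x y
  slim : ∀ (x y z : X) (α β γ : ℝ → X),
    IsGeodesicSegment α y z → IsGeodesicSegment β z x → IsGeodesicSegment γ x y →
    ∀ s ∈ Set.Icc (0 : ℝ) (dist y z),
      (∃ t ∈ Set.Icc (0 : ℝ) (dist z x), dist (α s) (β t) ≤ δ) ∨
      (∃ t ∈ Set.Icc (0 : ℝ) (dist x y), dist (α s) (γ t) ≤ δ)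
  insize : ∀ (x y z : X) (α β γ : ℝ → X),
    IsGeodesicSegment α y z → IsGeodesicSegment β z x → IsGeodesicSegment γ x y →
    dist (α (gromovProduct y x z)) (β (gromovProduct z x y)) ≤ δ ∧
    dist (β (gromovProduct z x y)) (γ (gromovProduct x y z)) ≤ δ ∧
    dist (γ (gromovProduct x y z)) (α (gromovProduct y x z)) ≤ δ
  gromov : ∀ w x y z : X,
    min (gromovProduct w x y) (gromovProduct w y z) - δ ≤ gromovProduct w x z

/-- An isometry `f` of `X` is hyperbolic if for every `x ∈ X` there is `t > 0` with
`t|m − n| ≤ d(f^m x, f^n x)` for all integers `m, n`. -/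
def IsHyperbolicIsometry (f : X ≃ᵢ X) : Prop :=
  ∀ x : X, ∃ t : ℝ, 0 < t ∧
    ∀ m n : ℤ, t * |(m : ℝ) - (n : ℝ)| ≤ dist ((f ^ m) x) ((f ^ n) x)

/-- A sequence converges to infinity if the Gromov products `(x_i·x_j)_w → ∞`. -/
def ConvergesToInfinity (w : X) (u : ℕ → X) : Prop :=
  Tendsto (fun p : ℕ × ℕ => gromovProduct w (u p.1) (u p.2)) atTop atTop

/-- Two sequences are equivalent if the mixed Gromov products tend to infinity. -/
def SeqEquiv (w : X) (u v : ℕ → X) : Prop :=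
  Tendsto (fun p : ℕ × ℕ => gromovProduct w (u p.1) (v p.2)) atTop atTop

/-- Sequences converging to infinity. -/
def BoundarySeq (w : X) : Type u := {u : ℕ → X // ConvergesToInfinity w u}

/-- The Gromov boundary `∂X`: equivalence classes of sequences converging to infinity. -/
def GromovBoundary (w : X) : Type u :=
  Quot (fun u v : BoundarySeq w => SeqEquiv w u.1 v.1)

/-- The boundary point determined by a sequence converging to infinity. -/
def boundaryPt (w : X) (u : BoundarySeq w) : GromovBoundary w := Quot.mk _ u

/-- `X̄ = X ∪ ∂X`. -/
def GromovClosure (w : X) : Type u := X ⊕ GromovBoundary w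

theorem gromovProduct_basepoint_ge (w w' x y : X) :
    gromovProduct w x y - dist w w' ≤ gromovProduct w' x y := by
  have h1 : |dist w' x - dist w x| ≤ dist w' w := abs_dist_sub_le w' w x
  have h2 : |dist w' y - dist w y| ≤ dist w' w := abs_dist_sub_le w' w y
  rw [abs_le] at h1 h2
  unfold gromovProduct
  rw [dist_comm x w', dist_comm x w, dist_comm w w']
  linarith [h1.1, h1.2, h2.1, h2.2]

theorem gromovProduct_isometry (f : X ≃ᵢ X) (w x y : X) :
    gromovProduct w (f x) (f y) = gromovProduct (f.symm w) x y := by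
  unfold gromovProduct
  conv_lhs => rw [show w = f (f.symm w) from (f.apply_symm_apply w).symm]
  rw [f.dist_eq, f.dist_eq, f.dist_eq]

theorem convergesToInfinity_isometry {w : X} (f : X ≃ᵢ X) {u : ℕ → X}
    (h : ConvergesToInfinity w u) :
    ConvergesToInfinity w (fun n => f (u n)) := by
  refine tendsto_atTop_mono (fun p => ?_)
    (tendsto_atTop_add_const_right atTop (-dist w (f.symm w)) h)
  have h1 := gromovProduct_basepoint_ge w (f.symm w) (u p.1) (u p.2)
  have h2 := gromovProduct_isometry f w (u p.1) (u p.2)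
  dsimp only
  linarith

theorem seqEquiv_isometry {w : X} (f : X ≃ᵢ X) {u v : ℕ → X}
    (h : SeqEquiv w u v) :
    SeqEquiv w (fun n => f (u n)) (fun n => f (v n)) := by
  refine tendsto_atTop_mono (fun p => ?_)
    (tendsto_atTop_add_const_right atTop (-dist w (f.symm w)) h)
  have h1 := gromovProduct_basepoint_ge w (f.symm w) (u p.1) (v p.2)
  have h2 := gromovProduct_isometry f w (u p.1) (v p.2)
  dsimp only
  linarith

/-- The extension of an isometry of `X` to the Gromov boundary. -/
def boundaryMap (w : X) (f : X ≃ᵢ X) : GromovBoundary w → GromovBoundary w :=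
  Quot.lift
    (fun u : BoundarySeq w =>
      boundaryPt w ⟨fun n => f (u.1 n), convergesToInfinity_isometry f u.2⟩)
    (fun _ _ h => Quot.sound (seqEquiv_isometry f h))

/-- The extension of an isometry of `X` to `X̄ = X ∪ ∂X`. -/
def closureMap (w : X) (f : X ≃ᵢ X) : GromovClosure w → GromovClosure w
  | Sum.inl x => Sum.inl (f x)
  | Sum.inr a => Sum.inr (boundaryMap w f a)

/-- The Gromov product of a boundary point with a point of `X̄`, extended by
taking infima of liminfs over representative sequences. -/
noncomputable def boundaryGP (w : X) (a : GromovBoundary w) : GromovClosure w → ℝ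
  | Sum.inl p => sInf {r : ℝ | ∃ u : BoundarySeq w, boundaryPt w u = a ∧
      r = Filter.liminf (fun n => gromovProduct w (u.1 n) p) atTop}
  | Sum.inr b => sInf {r : ℝ | ∃ u v : BoundarySeq w, boundaryPt w u = a ∧
      boundaryPt w v = b ∧
      r = Filter.liminf (fun n => gromovProduct w (u.1 n) (v.1 n)) atTop}

/-- The basis for the topology on `X̄`: open balls in `X`, and the sets
`N(â,k) = {y : (â·y)_w > k}` for boundary points `â` and `k > 0`. -/
def closureBasis (w : X) : Set (Set (GromovClosure w)) :=
  {S | (∃ (x : X) (r : ℝ), 0 < r ∧ S = Sum.inl '' Metric.ball x r) ∨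
       (∃ (a : GromovBoundary w) (k : ℝ), 0 < k ∧ S = {y | k < boundaryGP w a y})}

/-- The topology on `X̄` generated by the basis above. -/
def closureTop (w : X) : TopologicalSpace (GromovClosure w) :=
  TopologicalSpace.generateFrom (closureBasis w)

/-- `S ⊆ X̄` is a neighborhood of `p ∈ X̄`. -/
def IsNeighborhood (w : X) (S : Set (GromovClosure w)) (p : GromovClosure w) : Prop :=
  S ∈ @nhds (GromovClosure w) (closureTop w) p

/-- `a ∈ ∂X` is the attracting fixed point of `f`: it is represented by the
sequence `(f^n x)` for a point `x ∈ X`. -/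
def IsAttractingFixedPt (w : X) (f : X ≃ᵢ X) (a : GromovBoundary w) : Prop :=
  ∃ (x : X) (h : ConvergesToInfinity w (fun n : ℕ => (f ^ (n : ℤ)) x)),
    boundaryPt w ⟨fun n : ℕ => (f ^ (n : ℤ)) x, h⟩ = a

/-- `a ∈ ∂X` is the repelling fixed point of `f`: the attracting fixed point of `f⁻¹`. -/
def IsRepellingFixedPt (w : X) (f : X ≃ᵢ X) (a : GromovBoundary w) : Prop :=
  IsAttractingFixedPt w f⁻¹ a

/-- The concatenation `α · (f α)` of a path `α` defined on `[0, L]` with its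
image under `f`, parametrized on `[0, 2L]`. -/
noncomputable def concatPath (f : X ≃ᵢ X) (α : ℝ → X) (L : ℝ) : ℝ → X :=
  fun s => if s ≤ L then α s else f (α (s - L))

/-!
An isometry `h` is hyperbolic as soon as `d(h²w, w) > d(hw, w) + 2δ`: the orbit of `w` is then
a sequence of equal steps with small Gromov products at the corners, which the four-point
condition propagates into linear growth of `d(w, hⁿw)`.

Suppose there were arbitrarily large `m` and admissible `g` with `f^m g` not hyperbolic.
If `(g w · f^{-m} w)_w → ∞`, then, since `f^{-m} w → A₋`, the maps `g` eventually send a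
single point `p ∈ U₊ ∩ X` into `U₋`. Otherwise, along a subsequence, `(g w · f^{-m} w)_w`
stays bounded; then the failure of the criterion forces `(f^m g)⁻¹ w` to follow `f^m w`
towards `A₊`, so it lies in `U₊`, while `g` sends it to `f^{-m} w ∈ U₋`.
-/

theorem gromovProduct_nonneg (w x y : X) : 0 ≤ gromovProduct w x y := by
  have := dist_triangle x w y
  unfold gromovProduct
  linarith

theorem gromovProduct_comm (w x y : X) : gromovProduct w x y = gromovProduct w y x := by
  unfold gromovProduct
  rw [dist_comm x w, dist_comm w y, dist_comm x y]
  ring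

theorem gromovProduct_self (w x : X) : gromovProduct w x x = dist x w := by
  unfold gromovProduct
  rw [dist_comm w x, dist_self]
  ring

theorem gromovProduct_le_dist (w x y : X) : gromovProduct w x y ≤ dist y w := by
  have := dist_triangle x y w
  unfold gromovProduct
  rw [dist_comm w y]
  linarith

theorem gromovProduct_sub_dist_le_left (w x x' y : X) :
    gromovProduct w x y - dist x x' ≤ gromovProduct w x' y := by
  have := dist_triangle x x' w
  have := dist_triangle_left x' y x
  unfold gromovProduct
  linarith

theorem gromovProduct_sub_dist_le_right (w x y y' : X) :
    gromovProduct w x y - dist y y' ≤ gromovProduct w x y' := by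
  rw [gromovProduct_comm w x y, gromovProduct_comm w x y']
  exact gromovProduct_sub_dist_le_left w y y' x

theorem gromovProduct_map (e : X ≃ᵢ X) (w x y : X) :
    gromovProduct (e w) (e x) (e y) = gromovProduct w x y := by
  rw [gromovProduct_isometry, e.symm_apply_apply]

def IsGromovHyperbolic (X : Type u) [MetricSpace X] (δ : ℝ) : Prop :=
  ∀ w x y z : X, min (gromovProduct w x y) (gromovProduct w y z) - δ ≤ gromovProduct w x z

theorem IsDeltaHyperbolic.isGromovHyperbolic {δ : ℝ} (hX : IsDeltaHyperbolic X δ) :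
    IsGromovHyperbolic X δ :=
  hX.gromov

theorem IsGromovHyperbolic.nonneg {δ : ℝ} [Nonempty X] (hX : IsGromovHyperbolic X δ) :
    0 ≤ δ := by
  obtain ⟨w⟩ := ‹Nonempty X›
  have := hX w w w w
  simp only [gromovProduct_self, dist_self, min_self] at this
  linarith

theorem IsGromovHyperbolic.le_gromovProduct {δ : ℝ} (hX : IsGromovHyperbolic X δ)
    {w x y z : X} {C : ℝ} (hxy : C + δ ≤ gromovProduct w x y)
    (hyz : C + δ ≤ gromovProduct w y z) : C ≤ gromovProduct w x z := by
  have := hX w x y z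
  have := le_min hxy hyz
  linarith

theorem seqEquiv_iff {w : X} {u v : ℕ → X} :
    SeqEquiv w u v ↔ ∀ C : ℝ, ∃ N, ∀ i ≥ N, ∀ j ≥ N, C ≤ gromovProduct w (u i) (v j) := by
  rw [SeqEquiv, Filter.tendsto_atTop]
  refine forall_congr' fun C => ⟨fun h => ?_, fun ⟨N, hN⟩ => ?_⟩
  · obtain ⟨⟨N₁, N₂⟩, hN⟩ := eventually_atTop.mp h
    exact ⟨max N₁ N₂, fun i hi j hj => hN (i, j) ⟨le_of_max_le_left hi, le_of_max_le_right hj⟩⟩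
  · exact eventually_atTop.mpr ⟨(N, N), fun p hp => hN p.1 hp.1 p.2 hp.2⟩

theorem IsGromovHyperbolic.seqEquiv_of_tendsto_gromovProduct_comp {δ : ℝ}
    (hX : IsGromovHyperbolic X δ) {w : X} {u v z : ℕ → X} {m : ℕ → ℕ} (hm : Tendsto m atTop atTop)
    (huv : Tendsto (fun n => gromovProduct w (u n) (v (m n))) atTop atTop)
    (hvz : SeqEquiv w v z) : SeqEquiv w u z := by
  rw [seqEquiv_iff] at hvz ⊢
  intro C
  obtain ⟨N, hN⟩ := hvz (C + δ)
  obtain ⟨N', hN'⟩ := eventually_atTop.mp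
    ((Filter.tendsto_atTop.mp huv (C + δ)).and (Filter.tendsto_atTop.mp hm N))
  exact ⟨max N N', fun i hi j hj =>
    hX.le_gromovProduct (hN' i (le_of_max_le_right hi)).1
      (hN _ (hN' i (le_of_max_le_right hi)).2 j (le_of_max_le_left hj))⟩

theorem SeqEquiv.symm {w : X} {u v : ℕ → X} (h : SeqEquiv w u v) : SeqEquiv w v u := by
  rw [seqEquiv_iff] at h ⊢
  peel h with C N hN
  exact fun i hi j hj => gromovProduct_comm w (v i) (u j) ▸ hN j hj i hi

theorem SeqEquiv.tendsto_gromovProduct {w : X} {u v : ℕ → X} (h : SeqEquiv w u v) :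
    Tendsto (fun n => gromovProduct w (u n) (v n)) atTop atTop :=
  h.comp tendsto_atTop_diagonal

theorem SeqEquiv.trans {δ : ℝ} (hX : IsGromovHyperbolic X δ) {w : X} {u v z : ℕ → X}
    (huv : SeqEquiv w u v) (hvz : SeqEquiv w v z) : SeqEquiv w u z :=
  hX.seqEquiv_of_tendsto_gromovProduct_comp tendsto_id huv.tendsto_gromovProduct hvz

theorem SeqEquiv.convergesToInfinity {δ : ℝ} (hX : IsGromovHyperbolic X δ) {w : X}
    {u v : ℕ → X} (h : SeqEquiv w u v) : ConvergesToInfinity w u :=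
  h.trans hX h.symm

theorem SeqEquiv.of_dist_le {w : X} {u v u' v' : ℕ → X} (h : SeqEquiv w u v) {c : ℝ}
    (hu : ∀ n, dist (u n) (u' n) ≤ c) (hv : ∀ n, dist (v n) (v' n) ≤ c) :
    SeqEquiv w u' v' := by
  refine tendsto_atTop_mono (fun p => ?_) (tendsto_atTop_add_const_right _ (-(c + c)) h)
  have := gromovProduct_sub_dist_le_left w (u p.1) (u' p.1) (v p.2)
  have := gromovProduct_sub_dist_le_right w (u' p.1) (v p.2) (v' p.2)
  linarith [hu p.1, hv p.2]

theorem ConvergesToInfinity.seqEquiv_comp {w : X} {u : ℕ → X} (hu : ConvergesToInfinity w u)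
    {φ : ℕ → ℕ} (hφ : Tendsto φ atTop atTop) : SeqEquiv w (u ∘ φ) u := by
  rw [ConvergesToInfinity, ← prod_atTop_atTop_eq] at hu
  rw [SeqEquiv, ← prod_atTop_atTop_eq]
  exact hu.comp (hφ.prodMap tendsto_id)

theorem ConvergesToInfinity.tendsto_dist {w : X} {u : ℕ → X} (hu : ConvergesToInfinity w u) :
    Tendsto (fun n => dist (u n) w) atTop atTop := by
  simpa only [gromovProduct_self] using SeqEquiv.tendsto_gromovProduct hu

theorem seqEquiv_of_boundaryPt_eq {δ : ℝ} (hX : IsGromovHyperbolic X δ) {w : X}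
    {u v : BoundarySeq w} (h : boundaryPt w u = boundaryPt w v) : SeqEquiv w u.1 v.1 := by
  have hequiv : Equivalence (fun u v : BoundarySeq w => SeqEquiv w u.1 v.1) :=
    ⟨fun u => u.2, SeqEquiv.symm, fun huv hvz => huv.trans hX hvz⟩
  exact hequiv.eqvGen_iff.mp (Quot.eq.mp h)

theorem SeqEquiv.boundaryPt_eq {δ : ℝ} (hX : IsGromovHyperbolic X δ) {w : X} {u : ℕ → X}
    {v : BoundarySeq w} (h : SeqEquiv w u v.1) :
    boundaryPt w ⟨u, h.convergesToInfinity hX⟩ = boundaryPt w v :=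
  Quot.sound h

theorem Real.liminf_nonneg {α : Type*} {l : Filter α} {u : α → ℝ} (h : ∀ n, 0 ≤ u n) :
    0 ≤ liminf u l := by
  rw [liminf_eq]
  by_cases hb : BddAbove {a | ∀ᶠ n in l, a ≤ u n}
  · exact le_csSup hb (Eventually.of_forall h)
  · rw [Real.sSup_of_not_bddAbove hb]

theorem boundaryGP_inr_le {w : X} {a b : GromovBoundary w} {u v : BoundarySeq w}
    (hu : boundaryPt w u = a) (hv : boundaryPt w v = b) :
    boundaryGP w a (Sum.inr b) ≤ liminf (fun n => gromovProduct w (u.1 n) (v.1 n)) atTop := by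
  refine csInf_le ⟨0, ?_⟩ ⟨u, v, hu, hv, rfl⟩
  rintro _ ⟨u, v, -, -, rfl⟩
  exact Real.liminf_nonneg fun n => gromovProduct_nonneg _ _ _

theorem exists_liminf_lt_of_boundaryGP_inl_lt {w : X} {b : GromovBoundary w} {p : X} {c : ℝ}
    (h : boundaryGP w b (Sum.inl p) < c) :
    ∃ u : BoundarySeq w, boundaryPt w u = b ∧
      liminf (fun n => gromovProduct w (u.1 n) p) atTop < c := by
  obtain ⟨u, hu⟩ := Quot.exists_rep b
  obtain ⟨_, ⟨u, hu, rfl⟩, hlt⟩ := exists_lt_of_csInf_lt (by exact ⟨_, u, hu, rfl⟩) h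
  exact ⟨u, hu, hlt⟩

theorem IsGromovHyperbolic.eventually_lt_boundaryGP {δ : ℝ} (hX : IsGromovHyperbolic X δ)
    {w : X} {a b : GromovBoundary w} {k : ℝ} (hk : k < boundaryGP w b (Sum.inr a))
    {v : BoundarySeq w} (hv : boundaryPt w v = a) :
    ∀ᶠ n in atTop, k < boundaryGP w b (Sum.inl (v.1 n)) := by
  by_contra hcon
  obtain ⟨φ, hφ, hφk⟩ :=
    extraction_of_frequently_atTop ((not_eventually.mp hcon).mono fun n hn => not_lt.mp hn)
  obtain ⟨k', hkk', hk'⟩ := exists_between hk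
  have hrep (r : ℕ) := exists_liminf_lt_of_boundaryGP_inl_lt ((hφk r).trans_lt hkk')
  choose U hUb hUk using hrep
  obtain ⟨u₀, hu₀⟩ := Quot.exists_rep b
  -- a diagonal sequence `u' r = U r (t r)`, still representing `b`
  have hdiag (r : ℕ) : ∃ t j, r ≤ j ∧ (r : ℝ) ≤ gromovProduct w ((U r).1 t) (u₀.1 j) ∧
      gromovProduct w ((U r).1 t) (v.1 (φ r)) < k' := by
    obtain ⟨N, hN⟩ := seqEquiv_iff.mp
      (seqEquiv_of_boundaryPt_eq hX ((hUb r).trans hu₀.symm)) r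
    have hbdd : IsCoboundedUnder (· ≥ ·) atTop
        (fun n => gromovProduct w ((U r).1 n) (v.1 (φ r))) :=
      (isBoundedUnder_of ⟨dist (v.1 (φ r)) w, fun n => gromovProduct_le_dist _ _ _⟩)
        |>.isCoboundedUnder_ge
    obtain ⟨t, ht, htk⟩ := frequently_atTop.mp (frequently_lt_of_liminf_lt hbdd (hUk r)) N
    exact ⟨t, max N r, le_max_right _ _, hN t ht _ (le_max_left _ _), htk⟩
  choose t j hj hjt htk using hdiag
  have hu' : SeqEquiv w (fun r => (U r).1 (t r)) u₀.1 :=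
    hX.seqEquiv_of_tendsto_gromovProduct_comp (tendsto_atTop_mono hj tendsto_id)
      (tendsto_atTop_mono hjt tendsto_natCast_atTop_atTop) u₀.2
  have hv' : SeqEquiv w (v.1 ∘ φ) v.1 := v.2.seqEquiv_comp hφ.tendsto_atTop
  have hle :=
    boundaryGP_inr_le ((hu'.boundaryPt_eq hX).trans hu₀) ((hv'.boundaryPt_eq hX).trans hv)
  have hge : liminf (fun r => gromovProduct w ((U r).1 (t r)) (v.1 (φ r))) atTop ≤ k' :=
    liminf_le_of_le (isBoundedUnder_of ⟨0, fun r => gromovProduct_nonneg _ _ _⟩)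
      fun c hc => (hc.and (Eventually.of_forall fun r => (htk r).le)).exists.elim
        fun r hr => hr.1.trans hr.2
  exact (hle.trans hge).not_gt hk'

theorem IsGromovHyperbolic.eventually_mem_of_isNeighborhood {δ : ℝ}
    (hX : IsGromovHyperbolic X δ) {w : X} {a : GromovBoundary w} {S : Set (GromovClosure w)}
    (hS : IsNeighborhood w S (Sum.inr a)) {v : BoundarySeq w} (hv : boundaryPt w v = a) :
    ∀ᶠ n in atTop, Sum.inl (v.1 n) ∈ S := by
  let := closureTop w
  obtain ⟨_, ⟨F, ⟨hF, hFB⟩, rfl⟩, haF, hFS⟩ :=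
    (TopologicalSpace.isTopologicalBasis_of_subbasis rfl).mem_nhds_iff.mp hS
  refine ((eventually_all_finite hF).mpr fun s hs => ?_).mono fun n hn => hFS hn
  rcases hFB hs with ⟨x, r, -, rfl⟩ | ⟨b, k, -, rfl⟩
  · obtain ⟨_, -, h⟩ := haF _ hs
    exact absurd h Sum.inl_ne_inr
  · exact hX.eventually_lt_boundaryGP (haF _ hs) hv

theorem dist_zpow_apply_zpow_apply (h : X ≃ᵢ X) (p : X) (m n : ℤ) :
    dist ((h ^ m) p) ((h ^ n) p) = dist ((h ^ (m - n)) p) p := by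
  rw [← (h ^ n).dist_eq ((h ^ (m - n)) p) p, ← IsometryEquiv.mul_apply, ← zpow_add,
    add_sub_cancel]

theorem dist_zpow_neg_apply (h : X ≃ᵢ X) (p : X) (k : ℤ) :
    dist ((h ^ (-k)) p) p = dist ((h ^ k) p) p := by
  rw [← zero_sub, ← dist_zpow_apply_zpow_apply, zpow_zero, dist_comm]
  rfl

theorem dist_zpow_mul_apply_le (h : X ≃ᵢ X) (p : X) (k : ℤ) (j : ℕ) :
    dist ((h ^ (j * k)) p) p ≤ j * dist ((h ^ k) p) p := by
  induction j with
  | zero => simp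
  | succ j ih =>
    have hstep : dist ((h ^ ((j + 1 : ℕ) * k)) p) ((h ^ (j * k)) p) = dist ((h ^ k) p) p := by
      rw [dist_zpow_apply_zpow_apply]
      push_cast
      ring_nf
    have := dist_triangle ((h ^ ((j + 1 : ℕ) * k)) p) ((h ^ (j * k)) p) p
    push_cast at this hstep ⊢
    linarith

/-- Displacement is subadditive along powers, so the additive error `C` can be removed. -/
theorem mul_abs_le_dist_zpow_apply {h : X ≃ᵢ X} {p : X} {t C : ℝ}
    (hC : ∀ k : ℤ, t * |(k : ℝ)| - C ≤ dist ((h ^ k) p) p) (k : ℤ) :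
    t * |(k : ℝ)| ≤ dist ((h ^ k) p) p := by
  by_contra! hlt
  obtain ⟨j, hj⟩ := exists_nat_gt (C / (t * |(k : ℝ)| - dist ((h ^ k) p) p))
  have hjC := (div_lt_iff₀ (sub_pos.2 hlt)).mp hj
  have hjk := hC (j * k)
  have := dist_zpow_mul_apply_le h p k j
  push_cast at hjk
  rw [abs_mul, Nat.abs_cast] at hjk
  nlinarith

theorem isHyperbolicIsometry_of_le_dist_pow (h : X ≃ᵢ X) (w : X) {t C : ℝ} (ht : 0 < t)
    (hw : ∀ n : ℕ, t * n - C ≤ dist ((h ^ n) w) w) : IsHyperbolicIsometry h := by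
  have hwz (k : ℤ) : t * |(k : ℝ)| - C ≤ dist ((h ^ k) w) w := by
    obtain ⟨n, rfl | rfl⟩ := Int.eq_nat_or_neg k
    · simpa using hw n
    · rw [dist_zpow_neg_apply]
      simpa using hw n
  intro p
  refine ⟨t, ht, fun m n => ?_⟩
  rw [dist_zpow_apply_zpow_apply, ← Int.cast_sub]
  refine mul_abs_le_dist_zpow_apply (C := C + 2 * dist p w) (fun k => ?_) _
  have := dist_triangle4 ((h ^ k) w) ((h ^ k) p) p w
  rw [(h ^ k).dist_eq, dist_comm w p] at this
  linarith [hwz k]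

section QuasiGeodesic

variable {δ : ℝ} {x : ℕ → X} {L a : ℝ}

theorem IsGromovHyperbolic.gromovProduct_zero_le (hX : IsGromovHyperbolic X δ)
    (hL : ∀ n, dist (x n) (x (n + 1)) = L)
    (ha : ∀ n, gromovProduct (x (n + 1)) (x n) (x (n + 2)) ≤ a) (hLa : 2 * (a + δ) < L)
    (n : ℕ) : gromovProduct (x (n + 1)) (x 0) (x (n + 2)) ≤ a + δ := by
  have : Nonempty X := ⟨x 0⟩
  induction n with
  | zero => linarith [ha 0, hX.nonneg]
  | succ n ih =>
    by_contra! hbig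
    have hback : gromovProduct (x (n + 2)) (x (n + 1)) (x 0) =
        L - gromovProduct (x (n + 1)) (x 0) (x (n + 2)) := by
      unfold gromovProduct
      rw [← hL (n + 1), dist_comm (x (n + 2)) (x 0), dist_comm (x 0) (x (n + 1))]
      ring
    have h4 := hX (x (n + 2)) (x (n + 1)) (x 0) (x (n + 3))
    rw [hback] at h4
    have := ha (n + 1)
    have := lt_min (show a + δ < L - gromovProduct (x (n + 1)) (x 0) (x (n + 2)) by linarith) hbig
    linarith

theorem IsGromovHyperbolic.mul_le_dist (hX : IsGromovHyperbolic X δ)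
    (hL : ∀ n, dist (x n) (x (n + 1)) = L)
    (ha : ∀ n, gromovProduct (x (n + 1)) (x n) (x (n + 2)) ≤ a) (hLa : 2 * (a + δ) < L)
    (n : ℕ) : n * (L - 2 * (a + δ)) ≤ dist (x 0) (x n) := by
  have : Nonempty X := ⟨x 0⟩
  induction n with
  | zero => simp
  | succ n ih =>
    suffices dist (x 0) (x n) + (L - 2 * (a + δ)) ≤ dist (x 0) (x (n + 1)) by
      push_cast
      linarith
    rcases n with _ | n
    · linarith [hL 0, dist_self (x 0), ha 0, gromovProduct_nonneg (x 1) (x 0) (x 2), hX.nonneg]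
    · have := hX.gromovProduct_zero_le hL ha hLa n
      unfold gromovProduct at this
      rw [hL (n + 1)] at this
      linarith

end QuasiGeodesic

theorem IsGromovHyperbolic.isHyperbolicIsometry_of_lt_dist {δ : ℝ}
    (hX : IsGromovHyperbolic X δ) (h : X ≃ᵢ X) (w : X)
    (hw : dist (h w) w + 2 * δ < dist (h (h w)) w) : IsHyperbolicIsometry h := by
  have hsucc (n : ℕ) : (h ^ (n + 1)) w = (h ^ n) (h w) := by
    rw [pow_succ, IsometryEquiv.mul_apply]
  have hL (n : ℕ) : dist ((h ^ n) w) ((h ^ (n + 1)) w) = dist (h w) w := by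
    rw [hsucc, (h ^ n).dist_eq, dist_comm]
  have ha (n : ℕ) : gromovProduct ((h ^ (n + 1)) w) ((h ^ n) w) ((h ^ (n + 2)) w) ≤
      gromovProduct (h w) w (h (h w)) := by
    rw [hsucc, pow_add, sq, IsometryEquiv.mul_apply, IsometryEquiv.mul_apply, gromovProduct_map]
  have hLa : 2 * (gromovProduct (h w) w (h (h w)) + δ) < dist (h w) w := by
    unfold gromovProduct
    rw [h.dist_eq, dist_comm w (h (h w)), dist_comm w (h w)]
    linarith
  refine isHyperbolicIsometry_of_le_dist_pow h w (sub_pos.2 hLa) (C := 0) fun n => ?_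
  have := hX.mul_le_dist hL ha hLa n
  rw [pow_zero, IsometryEquiv.coe_one, id, dist_comm w] at this
  linarith

theorem IsGromovHyperbolic.gromovProduct_inv_apply_ge {δ : ℝ} (hX : IsGromovHyperbolic X δ)
    (F G : X ≃ᵢ X) (w : X)
    (hH : dist ((F * G) ((F * G) w)) w ≤ dist ((F * G) w) w + 2 * δ) :
    dist (F w) w / 2 - gromovProduct w (G w) (F⁻¹ w) - 2 * δ ≤
      gromovProduct w (F w) ((F * G)⁻¹ w) := by
  have : Nonempty X := ⟨w⟩
  have hδ := hX.nonneg
  set H := F * G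
  have hFinv : dist w (F⁻¹ w) = dist (F w) w := by
    rw [← F.dist_eq, IsometryEquiv.apply_inv_self, dist_comm]
  have hHw : dist (G w) (F⁻¹ w) = dist (H w) w := by
    rw [← F.dist_eq, IsometryEquiv.apply_inv_self]
    rfl
  have hFH : dist (F w) (H w) = dist (G w) w := by
    rw [IsometryEquiv.mul_apply, F.dist_eq, dist_comm]
  have hHinv : dist w (H⁻¹ w) = dist (H w) w := by
    rw [← H.dist_eq, IsometryEquiv.apply_inv_self, dist_comm]
  have hHH : dist (H w) (H⁻¹ w) = dist (H (H w)) w := by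
    rw [← H.dist_eq, IsometryEquiv.apply_inv_self]
  have hβ : gromovProduct w (G w) (F⁻¹ w) = (dist (G w) w + dist (F w) w - dist (H w) w) / 2 := by
    rw [gromovProduct, hFinv, hHw]
  have hFwHw : gromovProduct w (F w) (H w) = (dist (F w) w + dist (H w) w - dist (G w) w) / 2 := by
    rw [gromovProduct, dist_comm w (H w), hFH]
  have hHwHinv : gromovProduct w (H w) (H⁻¹ w) =
      (dist (H w) w + dist (H w) w - dist (H (H w)) w) / 2 := by
    rw [gromovProduct, hHinv, hHH]
  have hmin := le_min
    (show dist (F w) w / 2 - gromovProduct w (G w) (F⁻¹ w) - δ ≤ gromovProduct w (F w) (H w) by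
      rw [hβ, hFwHw]
      linarith [dist_nonneg (x := F w) (y := w)])
    (show dist (F w) w / 2 - gromovProduct w (G w) (F⁻¹ w) - δ ≤ gromovProduct w (H w) (H⁻¹ w) by
      rw [hβ, hHwHinv]
      linarith [dist_nonneg (x := G w) (y := w)])
  linarith [hX w (F w) (H w) (H⁻¹ w)]

theorem IsAttractingFixedPt.tendsto_dist_pow_apply {w : X} {f : X ≃ᵢ X} {a : GromovBoundary w}
    (ha : IsAttractingFixedPt w f a) (p : X) :
    Tendsto (fun n : ℕ => dist ((f ^ n) p) w) atTop atTop := by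
  obtain ⟨x, hx, -⟩ := ha
  refine tendsto_atTop_mono (fun n => ?_)
    (tendsto_atTop_add_const_right _ (-dist x p) hx.tendsto_dist)
  have := dist_triangle ((f ^ n) x) ((f ^ n) p) w
  rw [(f ^ n).dist_eq] at this
  show dist ((f ^ (n : ℤ)) x) w + -dist x p ≤ _
  rw [zpow_natCast]
  linarith

theorem IsAttractingFixedPt.eventually_mem {δ : ℝ} {w : X} {f : X ≃ᵢ X} {a : GromovBoundary w}
    (ha : IsAttractingFixedPt w f a) (hX : IsGromovHyperbolic X δ)
    {S : Set (GromovClosure w)} (hS : IsNeighborhood w S (Sum.inr a)) (p : X)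
    {m : ℕ → ℕ} (hm : Tendsto m atTop atTop) {u : ℕ → X}
    (hu : Tendsto (fun s => gromovProduct w (u s) ((f ^ m s) p)) atTop atTop) :
    ∀ᶠ s in atTop, Sum.inl (u s) ∈ S := by
  obtain ⟨x, hx, rfl⟩ := ha
  have hx' : SeqEquiv w (fun n : ℕ => (f ^ (n : ℤ)) x) (fun n : ℕ => (f ^ (n : ℤ)) x) := hx
  have hpx : SeqEquiv w (fun n => (f ^ n) p) (fun n : ℕ => (f ^ (n : ℤ)) x) :=
    hx'.of_dist_le (c := dist x p) (fun n => by rw [zpow_natCast, (f ^ n).dist_eq])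
      (fun n => by rw [dist_self]; exact dist_nonneg)
  exact hX.eventually_mem_of_isNeighborhood hS
    ((hX.seqEquiv_of_tendsto_gromovProduct_comp (v := fun n => (f ^ n) p) hm hu hpx).boundaryPt_eq
      hX (v := ⟨_, hx⟩))

theorem IsAttractingFixedPt.eventually_pow_apply_mem {δ : ℝ} {w : X} {f : X ≃ᵢ X}
    {a : GromovBoundary w} (ha : IsAttractingFixedPt w f a) (hX : IsGromovHyperbolic X δ)
    {S : Set (GromovClosure w)} (hS : IsNeighborhood w S (Sum.inr a)) (p : X)
    {m : ℕ → ℕ} (hm : Tendsto m atTop atTop) :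
    ∀ᶠ s in atTop, Sum.inl ((f ^ m s) p) ∈ S :=
  ha.eventually_mem hX hS p hm <| by
    simpa only [gromovProduct_self, Function.comp_def] using (ha.tendsto_dist_pow_apply p).comp hm

section PingPong

variable {δ : ℝ} {w : X} {f : X ≃ᵢ X} {Aplus Aminus : GromovBoundary w}
  {Uplus Uminus : Set (GromovClosure w)} {m : ℕ → ℕ} {g : ℕ → X ≃ᵢ X}

theorem not_tendsto_gromovProduct_of_mapsTo_compl (hX : IsGromovHyperbolic X δ)
    (hAp : IsAttractingFixedPt w f Aplus) (hAm : IsRepellingFixedPt w f Aminus)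
    (hUp : IsNeighborhood w Uplus (Sum.inr Aplus))
    (hUm : IsNeighborhood w Uminus (Sum.inr Aminus)) (hm : Tendsto m atTop atTop)
    (hg : ∀ s p, Sum.inl p ∈ Uplus → Sum.inl (g s p) ∉ Uminus) :
    ¬Tendsto (fun s => gromovProduct w (g s w) ((f ^ m s)⁻¹ w)) atTop atTop := by
  intro hβ
  obtain ⟨p, hp⟩ : ∃ p, Sum.inl p ∈ Uplus :=
    let ⟨_, hn⟩ := (hAp.eventually_pow_apply_mem hX hUp w tendsto_id).exists
    ⟨_, hn⟩
  have hgp : Tendsto (fun s => gromovProduct w (g s p) ((f⁻¹ ^ m s) w)) atTop atTop := by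
    refine tendsto_atTop_mono (fun s => ?_) (tendsto_atTop_add_const_right _ (-dist w p) hβ)
    have := gromovProduct_sub_dist_le_left w (g s w) (g s p) ((f ^ m s)⁻¹ w)
    rw [(g s).dist_eq, ← inv_pow] at this
    rw [← inv_pow]
    linarith
  obtain ⟨s, hs⟩ := (IsAttractingFixedPt.eventually_mem hAm hX hUm w hm hgp).exists
  exact hg s p hp hs

theorem exists_isHyperbolicIsometry_of_gromovProduct_le (hX : IsGromovHyperbolic X δ)
    (hAp : IsAttractingFixedPt w f Aplus) (hAm : IsRepellingFixedPt w f Aminus)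
    (hUp : IsNeighborhood w Uplus (Sum.inr Aplus))
    (hUm : IsNeighborhood w Uminus (Sum.inr Aminus)) (hm : Tendsto m atTop atTop)
    (hg : ∀ s p, Sum.inl p ∈ Uplus → Sum.inl (g s p) ∉ Uminus) {B : ℝ}
    (hB : ∀ s, gromovProduct w (g s w) ((f ^ m s)⁻¹ w) ≤ B) :
    ∃ s, IsHyperbolicIsometry (f ^ m s * g s) := by
  by_contra! hnot
  have hbad (s : ℕ) : dist ((f ^ m s * g s) ((f ^ m s * g s) w)) w ≤
      dist ((f ^ m s * g s) w) w + 2 * δ :=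
    not_lt.mp fun h => hnot s (hX.isHyperbolicIsometry_of_lt_dist _ w h)
  have hy : Tendsto (fun s => gromovProduct w ((f ^ m s * g s)⁻¹ w) ((f ^ m s) w))
      atTop atTop := by
    refine tendsto_atTop_mono (fun s => ?_) (tendsto_atTop_add_const_right _ (-(B + 2 * δ))
      (((hAp.tendsto_dist_pow_apply w).comp hm).atTop_div_const two_pos))
    have := hX.gromovProduct_inv_apply_ge (f ^ m s) (g s) w (hbad s)
    rw [gromovProduct_comm]
    dsimp only [Function.comp]
    linarith [hB s]
  obtain ⟨s, hys, hzs⟩ := ((hAp.eventually_mem hX hUp w hm hy).and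
    (IsAttractingFixedPt.eventually_pow_apply_mem hAm hX hUm w hm)).exists
  refine hg s _ hys ?_
  rwa [mul_inv_rev, IsometryEquiv.mul_apply, IsometryEquiv.apply_inv_self, ← inv_pow]

theorem exists_isHyperbolicIsometry_pow_mul (hX : IsGromovHyperbolic X δ)
    (hAp : IsAttractingFixedPt w f Aplus) (hAm : IsRepellingFixedPt w f Aminus)
    (hUp : IsNeighborhood w Uplus (Sum.inr Aplus))
    (hUm : IsNeighborhood w Uminus (Sum.inr Aminus)) (hm : Tendsto m atTop atTop)
    (hg : ∀ s p, Sum.inl p ∈ Uplus → Sum.inl (g s p) ∉ Uminus) :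
    ∃ s, IsHyperbolicIsometry (f ^ m s * g s) := by
  by_cases hβ : Tendsto (fun s => gromovProduct w (g s w) ((f ^ m s)⁻¹ w)) atTop atTop
  · exact absurd hβ (not_tendsto_gromovProduct_of_mapsTo_compl hX hAp hAm hUp hUm hm hg)
  obtain ⟨B, hB⟩ : ∃ B, ∃ᶠ s in atTop, gromovProduct w (g s w) ((f ^ m s)⁻¹ w) ≤ B := by
    simp only [Filter.tendsto_atTop, not_forall, not_eventually, not_le] at hβ
    obtain ⟨B, hB⟩ := hβ
    exact ⟨B, hB.mono fun _ => le_of_lt⟩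
  obtain ⟨φ, hφ, hφB⟩ := extraction_of_frequently_atTop hB
  obtain ⟨r, hr⟩ := exists_isHyperbolicIsometry_of_gromovProduct_le (m := m ∘ φ) (g := g ∘ φ)
    hX hAp hAm hUp hUm (hm.comp hφ.tendsto_atTop) (fun r => hg (φ r)) hφB
  exact ⟨φ r, hr⟩

end PingPong

theorem hyperbolic_of_power_comp_general (δ : ℝ) (hX : IsDeltaHyperbolic X δ) (w : X)
    (f : X ≃ᵢ X)
    (Aplus Aminus : GromovBoundary w)
    (hAp : IsAttractingFixedPt w f Aplus) (hAm : IsRepellingFixedPt w f Aminus)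
    (Uplus Uminus : Set (GromovClosure w))
    (hUp : IsNeighborhood w Uplus (Sum.inr Aplus))
    (hUm : IsNeighborhood w Uminus (Sum.inr Aminus)) :
    ∃ M : ℕ, 1 ≤ M ∧ ∀ m : ℕ, M ≤ m → ∀ g : X ≃ᵢ X,
      (closureMap w g '' Uplus) ∩ Uminus = ∅ →
      IsHyperbolicIsometry (f ^ m * g) := by
  by_contra! hbad
  choose m hm g hg hnot using fun s : ℕ => hbad (s + 1) (Nat.le_add_left 1 s)
  have hg' (s : ℕ) (p : X) (hp : Sum.inl p ∈ Uplus) : Sum.inl (g s p) ∉ Uminus := fun hq =>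
    eq_empty_iff_forall_notMem.mp (hg s) _ ⟨mem_image_of_mem _ hp, hq⟩
  obtain ⟨s, hs⟩ := exists_isHyperbolicIsometry_pow_mul hX.isGromovHyperbolic hAp hAm hUp hUm
    (tendsto_atTop_mono (fun s => (Nat.le_succ s).trans (hm s)) tendsto_id) hg'
  exact hnot s hs

/-- If `f` is a hyperbolic isometry of a `δ`-hyperbolic space with
attracting/repelling fixed points `A₊`, `A₋`, and `U₊`, `U₋` are disjoint
neighborhoods of `A₊`, `A₋` in `X̄`, then there is `M ≥ 1` such that for every
`m ≥ M` and every isometry `g` with `g U₊ ∩ U₋ = ∅`, the isometry `f^m g` is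
hyperbolic. -/
theorem hyperbolic_of_power_comp (δ : ℝ) (hX : IsDeltaHyperbolic X δ) (w : X)
    (f : X ≃ᵢ X) (hf : IsHyperbolicIsometry f)
    (Aplus Aminus : GromovBoundary w)
    (hAp : IsAttractingFixedPt w f Aplus) (hAm : IsRepellingFixedPt w f Aminus)
    (Uplus Uminus : Set (GromovClosure w))
    (hUp : IsNeighborhood w Uplus (Sum.inr Aplus))
    (hUm : IsNeighborhood w Uminus (Sum.inr Aminus))
    (hdisj : Uplus ∩ Uminus = ∅) :
    ∃ M : ℕ, 1 ≤ M ∧ ∀ m : ℕ, M ≤ m → ∀ g : X ≃ᵢ X,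
      (closureMap w g '' Uplus) ∩ Uminus = ∅ →
      IsHyperbolicIsometry (f ^ m * g) :=
  hyperbolic_of_power_comp_general δ hX w f Aplus Aminus hAp hAm Uplus Uminus hUp hUm
end
end

section
/- Let X be a δ-hyperbolic geodesic metric space, let f ∈ Isom(X) be a hyperbolic isometry with attracting and repelling fixed points A_+ and A_- in ∂X, and fix disjoint neighborhoods U_+ and U_- of A_+ and A_- in X̄. Then for every point x ∈ U_+ ∩ X there exist constants t > 0 and C ≥ 0 such that for every g ∈ Isom(X) with g U_+ ∩ U_- = ∅ and every integer m ≥ 0, d(x, f^m g x) ≥ m t − C. -/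
open Filter Metric Set

noncomputable section

universe u

variable {X : Type u} [MetricSpace X]

namespace GromovAux

variable {X : Type u} [MetricSpace X]

lemma gp_nonneg (w x y : X) : 0 ≤ gromovProduct w x y := by
  unfold gromovProduct
  have := dist_triangle x w y
  linarith

lemma gp_symm (w x y : X) : gromovProduct w x y = gromovProduct w y x := by
  unfold gromovProduct
  rw [dist_comm x w, dist_comm w y, dist_comm x y]
  ring

lemma gp_le_dist (w x y : X) : gromovProduct w x y ≤ dist w y := by
  unfold gromovProduct
  have := dist_triangle x y w
  rw [dist_comm y w] at this
  linarith [this]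

lemma gp_lipschitz (w x y y' : X) :
    gromovProduct w x y - dist y y' ≤ gromovProduct w x y' := by
  unfold gromovProduct
  have h1 : dist w y ≤ dist w y' + dist y' y := dist_triangle w y' y
  have h2 : dist x y' ≤ dist x y + dist y y' := dist_triangle x y y'
  rw [dist_comm y' y] at h1
  linarith

lemma tendsto_pair_iff {F : ℕ × ℕ → ℝ} :
    Tendsto F atTop atTop ↔
      ∀ B : ℝ, ∃ N : ℕ, ∀ i j : ℕ, N ≤ i → N ≤ j → B ≤ F (i, j) := by
  rw [Filter.tendsto_atTop]
  constructor
  · intro h B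
    obtain ⟨a, ha⟩ := eventually_atTop.mp (h B)
    exact ⟨max a.1 a.2, fun i j hi hj =>
      ha (i, j) ⟨le_trans (le_max_left _ _) hi, le_trans (le_max_right _ _) hj⟩⟩
  · intro h B
    obtain ⟨N, hN⟩ := h B
    rw [eventually_atTop]
    refine ⟨(N, N), fun b hb => ?_⟩
    have := hN b.1 b.2 hb.1 hb.2
    simpa using this

lemma liminf_nonneg' {f : ℕ → ℝ} (hf : ∀ n, 0 ≤ f n) : 0 ≤ Filter.liminf f atTop := by
  rw [Filter.liminf_eq]
  have h0 : (0 : ℝ) ∈ {a : ℝ | ∀ᶠ n in atTop, a ≤ f n} :=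
    Filter.Eventually.of_forall hf
  by_cases hb : BddAbove {a : ℝ | ∀ᶠ n in atTop, a ≤ f n}
  · exact le_csSup hb h0
  · rw [Real.sSup_of_not_bddAbove hb]

lemma liminf_le_of_forall_le {f : ℕ → ℝ} {b : ℝ} (hb : 0 ≤ b) (h : ∀ n, f n ≤ b) :
    Filter.liminf f atTop ≤ b := by
  rw [Filter.liminf_eq]
  refine Real.sSup_le (fun a ha => ?_) hb
  obtain ⟨n, hn⟩ := ha.exists
  exact hn.trans (h n)

lemma eventually_lt_of_lt_liminf' {f : ℕ → ℝ} {b : ℝ} (h0 : ∀ n, 0 ≤ f n)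
    (h : b < Filter.liminf f atTop) : ∀ᶠ n in atTop, b < f n := by
  rw [Filter.liminf_eq] at h
  have hne : {a : ℝ | ∀ᶠ n in atTop, a ≤ f n}.Nonempty := ⟨0, Filter.Eventually.of_forall h0⟩
  obtain ⟨a, haS, hba⟩ := exists_lt_of_lt_csSup hne h
  filter_upwards [haS] with n hn
  exact lt_of_lt_of_le hba hn

lemma frequently_lt_of_liminf_lt' {f : ℕ → ℝ} {b D : ℝ} (hD : ∀ n, f n ≤ D)
    (h : Filter.liminf f atTop < b) : ∃ᶠ n in atTop, f n < b := by
  by_contra hc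
  rw [Filter.not_frequently] at hc
  have hev : ∀ᶠ n in atTop, b ≤ f n := by
    filter_upwards [hc] with n hn
    exact le_of_not_gt hn
  have hbS : b ∈ {a : ℝ | ∀ᶠ n in atTop, a ≤ f n} := hev
  have hbdd : BddAbove {a : ℝ | ∀ᶠ n in atTop, a ≤ f n} := by
    refine ⟨D, fun a ha => ?_⟩
    obtain ⟨n, hn⟩ := ha.exists
    exact hn.trans (hD n)
  have : b ≤ Filter.liminf f atTop := by
    rw [Filter.liminf_eq]
    exact le_csSup hbdd hbS
  linarith

variable {δ : ℝ}

lemma seqEquiv_iff' {w : X} {u v : ℕ → X} :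
    SeqEquiv w u v ↔ ∀ B : ℝ, ∃ N : ℕ, ∀ i j : ℕ, N ≤ i → N ≤ j →
      B ≤ gromovProduct w (u i) (v j) :=
  tendsto_pair_iff

lemma convInf_iff' {w : X} {u : ℕ → X} :
    ConvergesToInfinity w u ↔ ∀ B : ℝ, ∃ N : ℕ, ∀ i j : ℕ, N ≤ i → N ≤ j →
      B ≤ gromovProduct w (u i) (u j) :=
  tendsto_pair_iff

lemma seqEquiv_symm' {w : X} {u v : ℕ → X} (h : SeqEquiv w u v) : SeqEquiv w v u := by
  rw [seqEquiv_iff'] at h ⊢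
  intro B
  obtain ⟨N, hN⟩ := h B
  refine ⟨N, fun i j hi hj => ?_⟩
  rw [gp_symm]
  exact hN j i hj hi

lemma seqEquiv_trans' (hX : IsDeltaHyperbolic X δ) {w : X} {u v z : ℕ → X}
    (huv : SeqEquiv w u v) (hvz : SeqEquiv w v z) : SeqEquiv w u z := by
  rw [seqEquiv_iff'] at huv hvz ⊢
  intro B
  obtain ⟨N₁, h₁⟩ := huv (B + δ)
  obtain ⟨N₂, h₂⟩ := hvz (B + δ)
  refine ⟨max N₁ N₂, fun i j hi hj => ?_⟩
  have hg := hX.gromov w (u i) (v (max N₁ N₂)) (z j)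
  have e1 : B + δ ≤ gromovProduct w (u i) (v (max N₁ N₂)) :=
    h₁ i _ (le_trans (le_max_left _ _) hi) (le_max_left _ _)
  have e2 : B + δ ≤ gromovProduct w (v (max N₁ N₂)) (z j) :=
    h₂ _ j (le_max_right _ _) (le_trans (le_max_right _ _) hj)
  have := le_min e1 e2
  linarith

lemma seqEquiv_equivalence (hX : IsDeltaHyperbolic X δ) (w : X) :
    Equivalence (fun u v : BoundarySeq w => SeqEquiv w u.1 v.1) :=
  ⟨fun u => u.2, fun h => seqEquiv_symm' h, fun h h' => seqEquiv_trans' hX h h'⟩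

lemma seqEquiv_of_mk_eq (hX : IsDeltaHyperbolic X δ) {w : X} {u v : BoundarySeq w}
    (h : boundaryPt w u = boundaryPt w v) : SeqEquiv w u.1 v.1 :=
  ((seqEquiv_equivalence hX w).eqvGen_iff).mp (Quot.eq.mp h)

lemma bddBelow_setInl (w : X) (a : GromovBoundary w) (p : X) :
    BddBelow {r : ℝ | ∃ u : BoundarySeq w, boundaryPt w u = a ∧
      r = Filter.liminf (fun n => gromovProduct w (u.1 n) p) atTop} := by
  refine ⟨0, fun r hr => ?_⟩
  obtain ⟨u, _, rfl⟩ := hr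
  exact liminf_nonneg' (fun n => gp_nonneg w (u.1 n) p)

lemma bddBelow_setInr (w : X) (a b : GromovBoundary w) :
    BddBelow {r : ℝ | ∃ u v : BoundarySeq w, boundaryPt w u = a ∧ boundaryPt w v = b ∧
      r = Filter.liminf (fun n => gromovProduct w (u.1 n) (v.1 n)) atTop} := by
  refine ⟨0, fun r hr => ?_⟩
  obtain ⟨u, v, _, _, rfl⟩ := hr
  exact liminf_nonneg' (fun n => gp_nonneg w (u.1 n) (v.1 n))

lemma boundaryGP_inl (w : X) (a : GromovBoundary w) (p : X) :
    boundaryGP w a (Sum.inl p) = sInf {r : ℝ | ∃ u : BoundarySeq w, boundaryPt w u = a ∧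
      r = Filter.liminf (fun n => gromovProduct w (u.1 n) p) atTop} := rfl

lemma boundaryGP_inr (w : X) (a b : GromovBoundary w) :
    boundaryGP w a (Sum.inr b) = sInf {r : ℝ | ∃ u v : BoundarySeq w,
      boundaryPt w u = a ∧ boundaryPt w v = b ∧
      r = Filter.liminf (fun n => gromovProduct w (u.1 n) (v.1 n)) atTop} := rfl

lemma dip_free (hX : IsDeltaHyperbolic X δ) {w : X} (A a : GromovBoundary w) {k : ℝ}
    (hka : k < boundaryGP w a (Sum.inr A)) :
    ∃ ρ : ℝ, 0 ≤ ρ ∧ ∀ z : X, ρ ≤ boundaryGP w A (Sum.inl z) →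
      k < boundaryGP w a (Sum.inl z) := by
  by_contra hcon
  push_neg at hcon
  choose z hz1 hz2 using fun n : ℕ => hcon n (Nat.cast_nonneg n)
  set c : ℝ := boundaryGP w a (Sum.inr A) with hc
  have hδ := hX.delta_nonneg
  set ε : ℝ := (c - k) / 3 with hε
  have hεpos : 0 < ε := by rw [hε]; linarith
  obtain ⟨ua, hua⟩ := Quot.exists_rep a
  obtain ⟨uA, huA⟩ := Quot.exists_rep A
  have hliminfA : ∀ n : ℕ,
      (n : ℝ) ≤ Filter.liminf (fun j => gromovProduct w (uA.1 j) (z n)) atTop := by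
    intro n
    refine le_trans (hz1 n) ?_
    rw [boundaryGP_inl]
    exact csInf_le (bddBelow_setInl w A (z n)) ⟨uA, huA, rfl⟩
  have hJ : ∀ n : ℕ, ∃ J : ℕ, ∀ j, J ≤ j →
      (n : ℝ) - 1 < gromovProduct w (uA.1 j) (z n) := by
    intro n
    have hev := eventually_lt_of_lt_liminf' (fun j => gp_nonneg w (uA.1 j) (z n))
      (lt_of_lt_of_le (by linarith : (n:ℝ) - 1 < (n:ℝ)) (hliminfA n))
    obtain ⟨J, hJ⟩ := eventually_atTop.mp hev
    exact ⟨J, hJ⟩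
  choose J hJ using hJ
  have hzconv : ConvergesToInfinity w z := by
    rw [convInf_iff']
    intro B
    obtain ⟨N, hN⟩ := exists_nat_ge (B + δ + 1)
    refine ⟨N, fun i j hi hj => ?_⟩
    have h1 := hJ i (max (J i) (J j)) (le_max_left _ _)
    have h2 := hJ j (max (J i) (J j)) (le_max_right _ _)
    have hg := hX.gromov w (z i) (uA.1 (max (J i) (J j))) (z j)
    have hiN : (N:ℝ) ≤ i := Nat.cast_le.mpr hi
    have hjN : (N:ℝ) ≤ j := Nat.cast_le.mpr hj
    have h1' : B + δ ≤ gromovProduct w (z i) (uA.1 (max (J i) (J j))) := by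
      rw [gp_symm]; linarith
    have h2' : B + δ ≤ gromovProduct w (uA.1 (max (J i) (J j))) (z j) := by linarith
    have := le_min h1' h2'
    linarith
  have hzequiv : SeqEquiv w z uA.1 := by
    rw [seqEquiv_iff']
    intro B
    obtain ⟨N₂, hN₂⟩ := convInf_iff'.mp uA.2 (B + δ)
    obtain ⟨N₃, hN₃⟩ := exists_nat_ge (B + δ + 1)
    refine ⟨max N₂ N₃, fun i j hi hj => ?_⟩
    have h1 := hJ i (max (J i) N₂) (le_max_left _ _)
    have h2 : B + δ ≤ gromovProduct w (uA.1 (max (J i) N₂)) (uA.1 j) :=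
      hN₂ _ j (le_max_right _ _) (le_trans (le_max_left _ _) hj)
    have hg := hX.gromov w (z i) (uA.1 (max (J i) N₂)) (uA.1 j)
    have hiN : (N₃:ℝ) ≤ i := Nat.cast_le.mpr (le_trans (le_max_right _ _) hi)
    have h1' : B + δ ≤ gromovProduct w (z i) (uA.1 (max (J i) N₂)) := by
      rw [gp_symm]; linarith
    have := le_min h1' h2
    linarith
  have hsmall : ∀ n : ℕ, ∃ u : BoundarySeq w, boundaryPt w u = a ∧
      Filter.liminf (fun j => gromovProduct w (u.1 j) (z n)) atTop < k + ε := by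
    intro n
    have hlt : sInf {r : ℝ | ∃ u : BoundarySeq w, boundaryPt w u = a ∧
        r = Filter.liminf (fun j => gromovProduct w (u.1 j) (z n)) atTop} < k + ε := by
      have h2 := hz2 n
      rw [boundaryGP_inl] at h2
      linarith
    have hne : {r : ℝ | ∃ u : BoundarySeq w, boundaryPt w u = a ∧
        r = Filter.liminf (fun j => gromovProduct w (u.1 j) (z n)) atTop}.Nonempty :=
      ⟨_, ua, hua, rfl⟩
    obtain ⟨r, ⟨u, hu, rfl⟩, hrlt⟩ :=
      (csInf_lt_iff (bddBelow_setInl w a (z n)) hne).mp hlt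
    exact ⟨u, hu, hrlt⟩
  choose un hun_mk hun_lim using hsmall
  have hequiv : ∀ n, SeqEquiv w (un n).1 ua.1 := fun n =>
    seqEquiv_of_mk_eq hX ((hun_mk n).trans hua.symm)
  have hNn : ∀ n : ℕ, ∃ N : ℕ, ∀ i j, N ≤ i → N ≤ j →
      (n:ℝ) ≤ gromovProduct w ((un n).1 i) (ua.1 j) :=
    fun n => seqEquiv_iff'.mp (hequiv n) (n:ℝ)
  choose Nn hNn using hNn
  have hfreq : ∀ n : ℕ, ∃ j, Nn n ≤ j ∧
      gromovProduct w ((un n).1 j) (z n) < k + ε := by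
    intro n
    have hf := frequently_lt_of_liminf_lt'
      (fun j => gp_le_dist w ((un n).1 j) (z n)) (hun_lim n)
    obtain ⟨j, hj1, hj2⟩ := (hf.and_eventually (eventually_ge_atTop (Nn n))).exists
    exact ⟨j, hj2, hj1⟩
  choose σ hσN hσlt using hfreq
  have H1 : ∀ n j, Nn n ≤ j → (n:ℝ) ≤ gromovProduct w ((un n).1 (σ n)) (ua.1 j) :=
    fun n j hj => hNn n (σ n) j (hσN n) hj
  have hustarconv : ConvergesToInfinity w (fun n => (un n).1 (σ n)) := by
    rw [convInf_iff']
    intro B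
    obtain ⟨N, hN⟩ := exists_nat_ge (B + δ)
    refine ⟨N, fun i j hi hj => ?_⟩
    have h1 := H1 i (max (Nn i) (Nn j)) (le_max_left _ _)
    have h2 := H1 j (max (Nn i) (Nn j)) (le_max_right _ _)
    have hg := hX.gromov w ((un i).1 (σ i)) (ua.1 (max (Nn i) (Nn j))) ((un j).1 (σ j))
    have hiN : (N:ℝ) ≤ i := Nat.cast_le.mpr hi
    have hjN : (N:ℝ) ≤ j := Nat.cast_le.mpr hj
    have h1' : B + δ ≤ gromovProduct w ((un i).1 (σ i)) (ua.1 (max (Nn i) (Nn j))) := by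
      linarith
    have h2' : B + δ ≤ gromovProduct w (ua.1 (max (Nn i) (Nn j))) ((un j).1 (σ j)) := by
      rw [gp_symm]; linarith
    have := le_min h1' h2'
    linarith
  have hustarequiv : SeqEquiv w (fun n => (un n).1 (σ n)) ua.1 := by
    rw [seqEquiv_iff']
    intro B
    obtain ⟨N₂, hN₂⟩ := convInf_iff'.mp ua.2 (B + δ)
    obtain ⟨N₃, hN₃⟩ := exists_nat_ge (B + δ)
    refine ⟨max N₂ N₃, fun i j hi hj => ?_⟩
    have h1 := H1 i (max (Nn i) N₂) (le_max_left _ _)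
    have h2 : B + δ ≤ gromovProduct w (ua.1 (max (Nn i) N₂)) (ua.1 j) :=
      hN₂ _ j (le_max_right _ _) (le_trans (le_max_left _ _) hj)
    have hg := hX.gromov w ((un i).1 (σ i)) (ua.1 (max (Nn i) N₂)) (ua.1 j)
    have hiN : (N₃:ℝ) ≤ i := Nat.cast_le.mpr (le_trans (le_max_right _ _) hi)
    have h1' : B + δ ≤ gromovProduct w ((un i).1 (σ i)) (ua.1 (max (Nn i) N₂)) := by
      linarith
    have := le_min h1' h2
    linarith
  have hel : Filter.liminf (fun n => gromovProduct w ((un n).1 (σ n)) (z n)) atTop ∈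
      {r : ℝ | ∃ u v : BoundarySeq w, boundaryPt w u = a ∧ boundaryPt w v = A ∧
        r = Filter.liminf (fun n => gromovProduct w (u.1 n) (v.1 n)) atTop} :=
    by
    have hmk1 : boundaryPt w (⟨fun n => (un n).1 (σ n), hustarconv⟩ : BoundarySeq w) =
        boundaryPt w ua := Quot.sound hustarequiv
    have hmk2 : boundaryPt w (⟨z, hzconv⟩ : BoundarySeq w) = boundaryPt w uA :=
      Quot.sound hzequiv
    exact ⟨⟨fun n => (un n).1 (σ n), hustarconv⟩, ⟨z, hzconv⟩,
      hmk1.trans hua, hmk2.trans huA, rfl⟩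
  have hlow : c ≤ Filter.liminf (fun n => gromovProduct w ((un n).1 (σ n)) (z n)) atTop := by
    rw [hc, boundaryGP_inr]
    exact csInf_le (bddBelow_setInr w a A) hel
  have hup : Filter.liminf (fun n => gromovProduct w ((un n).1 (σ n)) (z n)) atTop ≤ k + ε := by
    refine liminf_le_of_forall_le ?_ (fun n => le_of_lt (hσlt n))
    have h0 := gp_nonneg w ((un 0).1 (σ 0)) (z 0)
    have := hσlt 0
    linarith
  linarith

lemma uniform_rho (hX : IsDeltaHyperbolic X δ) {w : X} (A : GromovBoundary w)
    (T : Finset (GromovBoundary w × ℝ))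
    (hT : ∀ p ∈ T, 0 < p.2 ∧ p.2 < boundaryGP w p.1 (Sum.inr A)) :
    ∃ ρ : ℝ, 0 ≤ ρ ∧ ∀ p ∈ T, ∀ z : X, ρ ≤ boundaryGP w A (Sum.inl z) →
      p.2 < boundaryGP w p.1 (Sum.inl z) := by
  classical
  induction T using Finset.induction_on with
  | empty => exact ⟨0, le_refl 0, by simp⟩
  | @insert q s _ IH =>
      obtain ⟨ρ₁, hρ₁0, hρ₁⟩ := IH (fun p hp => hT p (Finset.mem_insert_of_mem hp))
      obtain ⟨ρ₂, hρ₂0, hρ₂⟩ :=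
        dip_free hX A q.1 (hT q (Finset.mem_insert_self q s)).2
      refine ⟨max ρ₁ ρ₂, le_trans hρ₁0 (le_max_left _ _), fun p hp zz hz => ?_⟩
      rcases Finset.mem_insert.mp hp with rfl | hp'
      · exact hρ₂ zz (le_trans (le_max_right _ _) hz)
      · exact hρ₁ p hp' zz (le_trans (le_max_left _ _) hz)

lemma nhds_extract {w : X} (A : GromovBoundary w) (U : Set (GromovClosure w))
    (hU : IsNeighborhood w U (Sum.inr A)) :
    ∃ T : Finset (GromovBoundary w × ℝ),
      (∀ p ∈ T, 0 < p.2 ∧ p.2 < boundaryGP w p.1 (Sum.inr A)) ∧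
      {y : GromovClosure w | ∀ p ∈ T, p.2 < boundaryGP w p.1 y} ⊆ U := by
  classical
  letI : TopologicalSpace (GromovClosure w) := closureTop w
  letI : TopologicalSpace (X ⊕ GromovBoundary w) := closureTop w
  have hU' : U ∈ nhds (Sum.inr A : GromovClosure w) := hU
  obtain ⟨O, hOU, hOopen, hAO⟩ := _root_.mem_nhds_iff.mp hU'
  have hgen : TopologicalSpace.GenerateOpen (closureBasis w) O := hOopen
  suffices H : ∀ O' : Set (GromovClosure w),
      TopologicalSpace.GenerateOpen (closureBasis w) O' →
      Sum.inr A ∈ O' → ∃ T : Finset (GromovBoundary w × ℝ),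
        (∀ p ∈ T, 0 < p.2 ∧ p.2 < boundaryGP w p.1 (Sum.inr A)) ∧
        {y : GromovClosure w | ∀ p ∈ T, p.2 < boundaryGP w p.1 y} ⊆ O' by
    obtain ⟨T, h1, h2⟩ := H O hgen hAO
    exact ⟨T, h1, h2.trans hOU⟩
  intro O' hO'
  induction hO' with
  | basic s hs =>
      intro hmem
      rcases hs with ⟨x', r, _, rfl⟩ | ⟨a, kk, hk, rfl⟩
      · obtain ⟨_, _, habs⟩ := hmem
        cases habs
      · refine ⟨{(a, kk)}, ?_, ?_⟩
        · intro p hp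
          rw [Finset.mem_singleton] at hp
          subst hp
          exact ⟨hk, hmem⟩
        · intro y hy
          exact hy (a, kk) (Finset.mem_singleton_self _)
  | univ => exact fun _ => ⟨∅, by simp, fun y _ => Set.mem_univ y⟩
  | inter s t _ _ IHs IHt =>
      intro hmem
      obtain ⟨T₁, h11, h12⟩ := IHs hmem.1
      obtain ⟨T₂, h21, h22⟩ := IHt hmem.2
      refine ⟨T₁ ∪ T₂, ?_, ?_⟩
      · intro p hp
        rcases Finset.mem_union.mp hp with h | h
        exacts [h11 p h, h21 p h]
      · intro y hy
        exact ⟨h12 (fun p hp => hy p (Finset.mem_union_left _ hp)),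
               h22 (fun p hp => hy p (Finset.mem_union_right _ hp))⟩
  | sUnion S _ IH =>
      intro hmem
      obtain ⟨s, hsS, hmem'⟩ := hmem
      obtain ⟨T, h1, h2⟩ := IH s hsS hmem'
      exact ⟨T, h1, h2.trans (Set.subset_sUnion_of_mem hsS)⟩

end GromovAux

/-- With `f`, `A₊`, `A₋`, `U₊`, `U₋` as in Statement 1, for every
`x ∈ U₊ ∩ X` there are constants `t > 0` and `C ≥ 0` such that for every isometry
`g` with `g U₊ ∩ U₋ = ∅` and every `m ≥ 0`, `d(x, f^m g x) ≥ mt − C`. -/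
theorem dist_lower_bound_of_power_comp (δ : ℝ) (hX : IsDeltaHyperbolic X δ) (w : X)
    (f : X ≃ᵢ X) (hf : IsHyperbolicIsometry f)
    (Aplus Aminus : GromovBoundary w)
    (hAp : IsAttractingFixedPt w f Aplus) (hAm : IsRepellingFixedPt w f Aminus)
    (Uplus Uminus : Set (GromovClosure w))
    (hUp : IsNeighborhood w Uplus (Sum.inr Aplus))
    (hUm : IsNeighborhood w Uminus (Sum.inr Aminus))
    (hdisj : Uplus ∩ Uminus = ∅)
    (x : X) (hx : Sum.inl x ∈ Uplus) :
    ∃ t : ℝ, 0 < t ∧ ∃ C : ℝ, 0 ≤ C ∧ ∀ g : X ≃ᵢ X,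
      (closureMap w g '' Uplus) ∩ Uminus = ∅ →
      ∀ m : ℕ, (m : ℝ) * t - C ≤ dist x ((f ^ m * g) x) := by
  classical
  obtain ⟨x₀, hξconv, hξmk⟩ := hAm
  set ξf : ℕ → X := fun n : ℕ => (f⁻¹ ^ (n:ℤ)) x₀ with hξf
  obtain ⟨t₀, ht₀, hfx⟩ := hf x
  have hδ := hX.delta_nonneg
  obtain ⟨T, hT, hTsub⟩ := GromovAux.nhds_extract Aminus Uminus hUm
  obtain ⟨ρ, hρ0, hρ⟩ := GromovAux.uniform_rho hX Aminus T hT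
  set E : ℝ := dist x₀ x with hE
  have hE0 : 0 ≤ E := dist_nonneg
  set D : ℝ := ρ + 2 * δ + E + 2 with hD
  obtain ⟨M₀, hM₀⟩ := GromovAux.convInf_iff'.mp hξconv D
  have hC0 : (0:ℝ) ≤ t₀ * M₀ + dist x w + 2 * ρ + 2 * δ + 2 := by
    have h1 : (0:ℝ) ≤ t₀ * M₀ := mul_nonneg ht₀.le (Nat.cast_nonneg M₀)
    have h2 : (0:ℝ) ≤ dist x w := dist_nonneg
    linarith
  refine ⟨t₀, ht₀, t₀ * M₀ + dist x w + 2 * ρ + 2 * δ + 2, hC0, fun g hg m => ?_⟩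
  have hiddist : dist x ((f ^ m * g) x) = dist ((f ^ (-(m:ℤ))) x) (g x) := by
    have h1 : (f ^ m * g) x = (f ^ (m:ℤ)) (g x) := by
      rw [IsometryEquiv.mul_apply, ← zpow_natCast]
    rw [h1]
    have h2 := IsometryEquiv.dist_eq (f ^ (-(m:ℤ))) x ((f ^ (m:ℤ)) (g x))
    have h3 : (f ^ (-(m:ℤ))) ((f ^ (m:ℤ)) (g x)) = g x := by
      rw [← IsometryEquiv.mul_apply, ← zpow_add, neg_add_cancel, zpow_zero]
      rfl
    rw [h3] at h2
    exact h2.symm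
  have horbit : t₀ * (m:ℝ) ≤ dist ((f ^ (-(m:ℤ))) x) x := by
    have h := hfx (-(m:ℤ)) 0
    have habs : |((-(m:ℤ) : ℤ) : ℝ) - ((0:ℤ) : ℝ)| = (m:ℝ) := by
      push_cast
      simp [abs_of_nonpos]
    rw [habs, zpow_zero] at h
    exact h
  by_cases hm : M₀ ≤ m
  · -- main case: bound the Gromov product
    have hgx_not : Sum.inl (g x) ∉ Uminus := by
      intro hmem
      have himg : Sum.inl (g x) ∈ closureMap w g '' Uplus := ⟨Sum.inl x, hx, rfl⟩
      have hin : Sum.inl (g x) ∈ (closureMap w g '' Uplus) ∩ Uminus := ⟨himg, hmem⟩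
      rw [hg] at hin
      exact hin
    have hfail : ∃ p ∈ T, boundaryGP w p.1 (Sum.inl (g x)) ≤ p.2 := by
      by_contra hcc
      push_neg at hcc
      exact hgx_not (hTsub (fun p hp => hcc p hp))
    obtain ⟨p, hpT, hple⟩ := hfail
    have hdepth : boundaryGP w Aminus (Sum.inl (g x)) < ρ := by
      by_contra hdd
      push_neg at hdd
      exact absurd (hρ p hpT (g x) hdd) (not_lt.mpr hple)
    rw [GromovAux.boundaryGP_inl] at hdepth
    have hne : {r : ℝ | ∃ u : BoundarySeq w, boundaryPt w u = Aminus ∧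
        r = Filter.liminf (fun n => gromovProduct w (u.1 n) (g x)) atTop}.Nonempty :=
      ⟨_, ⟨⟨ξf, hξconv⟩, hξmk, rfl⟩⟩
    obtain ⟨r, ⟨v, hv_mk, rfl⟩, hrρ⟩ :=
      (csInf_lt_iff (GromovAux.bddBelow_setInl w Aminus (g x)) hne).mp hdepth
    have hfreqv : ∃ᶠ j in atTop, gromovProduct w (v.1 j) (g x) < ρ :=
      GromovAux.frequently_lt_of_liminf_lt'
        (fun j => GromovAux.gp_le_dist w (v.1 j) (g x)) hrρ
    have hvξ0 : boundaryPt w v = boundaryPt w (⟨ξf, hξconv⟩ : BoundarySeq w) :=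
      hv_mk.trans hξmk.symm
    have hvξ1 := GromovAux.seqEquiv_of_mk_eq hX hvξ0
    have hvξ : SeqEquiv w v.1 ξf := hvξ1
    obtain ⟨N₁, hN₁⟩ := GromovAux.seqEquiv_iff'.mp hvξ D
    have hev : ∀ j, max N₁ M₀ ≤ j →
        ρ + δ + 1 ≤ gromovProduct w (v.1 j) ((f ^ (-(m:ℤ))) x) := by
      intro j hj
      have e1 : D ≤ gromovProduct w (v.1 j) (ξf j) :=
        hN₁ j j (le_trans (le_max_left _ _) hj) (le_trans (le_max_left _ _) hj)
      have e2 : D ≤ gromovProduct w (ξf j) (ξf m) :=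
        hM₀ j m (le_trans (le_max_right _ _) hj) hm
      have hg2 := hX.gromov w (v.1 j) (ξf j) (ξf m)
      have hlip := GromovAux.gp_lipschitz w (v.1 j) (ξf m) ((f ^ (-(m:ℤ))) x)
      have hEd : dist (ξf m) ((f ^ (-(m:ℤ))) x) = E := by
        have hpow : (f⁻¹ : X ≃ᵢ X) ^ (m:ℤ) = f ^ (-(m:ℤ)) := by
          rw [inv_zpow, ← zpow_neg]
        have hxm : ξf m = (f ^ (-(m:ℤ))) x₀ := by rw [hξf]; simp only []; rw [hpow]
        rw [hxm, IsometryEquiv.dist_eq]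
      rw [hEd] at hlip
      have hmin := le_min e1 e2
      linarith
    obtain ⟨j, hj1, hj2⟩ :=
      (hfreqv.and_eventually (eventually_ge_atTop (max N₁ M₀))).exists
    have hkey := hX.gromov w (v.1 j) ((f ^ (-(m:ℤ))) x) (g x)
    have hlow := hev j hj2
    have hmin : min (gromovProduct w (v.1 j) ((f ^ (-(m:ℤ))) x))
        (gromovProduct w ((f ^ (-(m:ℤ))) x) (g x)) < ρ + δ := by linarith
    have key : gromovProduct w ((f ^ (-(m:ℤ))) x) (g x) < ρ + δ := by
      rcases min_lt_iff.mp hmin with h | h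
      · linarith
      · exact h
    have keyd : (dist ((f ^ (-(m:ℤ))) x) w + dist w (g x)
        - dist ((f ^ (-(m:ℤ))) x) (g x)) / 2 < ρ + δ := key
    have htri : dist ((f ^ (-(m:ℤ))) x) x ≤ dist ((f ^ (-(m:ℤ))) x) w + dist w x :=
      dist_triangle _ _ _
    have hwx : dist w x = dist x w := dist_comm w x
    have hwgx : (0:ℝ) ≤ dist w (g x) := dist_nonneg
    have hM0t : (0:ℝ) ≤ t₀ * M₀ := mul_nonneg ht₀.le (Nat.cast_nonneg M₀)
    rw [hiddist]
    linarith
  · -- small m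
    push_neg at hm
    have hmM : (m:ℝ) ≤ (M₀:ℝ) := Nat.cast_le.mpr hm.le
    have h1 : t₀ * (m:ℝ) ≤ t₀ * (M₀:ℝ) := mul_le_mul_of_nonneg_left hmM ht₀.le
    have h2 : (0:ℝ) ≤ dist x ((f ^ m * g) x) := dist_nonneg
    have h3 : (0:ℝ) ≤ dist x w := dist_nonneg
    linarith
end
end
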